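/- Let G be a 5-minimal subcubic graph (G² is not DP-5-colorable but the square of every proper subgraph of G is). Then G contains no 3-thread, i.e., no path on three vertices all of which have degree 2 in G. -/

import Mathlib

open scoped Classical

universe u v

open Finset

/-- `(H, L)` is a DP-cover of `G`: fibers are cliques, cross edges exist only between
fibers of adjacent vertices and form matchings, and all edges stay within the lists. -/
def IsDPCover {V : Type u} (G : SimpleGraph V) (L : V → Finset ℕ)
    (H : SimpleGraph (V × ℕ)) : Prop :=
  (∀ v : V, ∀ c ∈ L v, ∀ c' ∈ L v, c ≠ c' → H.Adj (v, c) (v, c')) ∧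
  (∀ u v : V, ∀ c c' : ℕ, H.Adj (u, c) (v, c') →
      c ∈ L u ∧ c' ∈ L v ∧ (u = v ∨ G.Adj u v)) ∧
  (∀ u v : V, u ≠ v → ∀ c c₁ c₂ : ℕ,
      H.Adj (u, c) (v, c₁) → H.Adj (u, c) (v, c₂) → c₁ = c₂)

/-- `G` is DP-`k`-colorable: every cover with lists of size at least `k` admits an
independent transversal (one vertex from each fiber, pairwise nonadjacent in `H`). -/
def DPColorable {V : Type u} (G : SimpleGraph V) (k : ℕ) : Prop :=
  ∀ (L : V → Finset ℕ) (H : SimpleGraph (V × ℕ)),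
    IsDPCover G L H → (∀ v, k ≤ (L v).card) →
    ∃ f : V → ℕ, (∀ v, f v ∈ L v) ∧
      ∀ u v : V, u ≠ v → ¬ H.Adj (u, f u) (v, f v)

noncomputable def dpChromaticNumber {V : Type u} (G : SimpleGraph V) : ℕ :=
  sInf {k | DPColorable G k}

/-- The square of a graph: join vertices at distance at most 2. -/
def graphSq {V : Type u} (G : SimpleGraph V) : SimpleGraph V where
  Adj u v := u ≠ v ∧ (G.Adj u v ∨ ∃ w, G.Adj u w ∧ G.Adj w v)
  symm := ⟨by
    rintro u v ⟨h1, h2⟩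
    refine ⟨h1.symm, ?_⟩
    rcases h2 with h | ⟨w, hw1, hw2⟩
    · exact Or.inl h.symm
    · exact Or.inr ⟨w, hw2.symm, hw1.symm⟩⟩
  loopless := ⟨fun v h => h.1 rfl⟩

/-- `G` is `k`-minimal: `G²` is not DP-`k`-colorable but the square of every proper
subgraph of `G` is DP-`k`-colorable. -/
def KMinimal {V : Type u} (G : SimpleGraph V) (k : ℕ) : Prop :=
  ¬ DPColorable (graphSq G) k ∧ ∀ H : SimpleGraph V, H < G → DPColorable (graphSq H) k

/-- `mad(G) < q`: every nonempty (induced) subgraph has average degree less than `q`.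
The filtered product counts each edge twice, i.e. it equals `2|E(H)|`. -/
def MadLT {V : Type u} [Fintype V] (G : SimpleGraph V) (q : ℚ) : Prop :=
  ∀ s : Finset V, s.Nonempty →
    ((((s ×ˢ s).filter fun p : V × V => G.Adj p.1 p.2).card : ℚ)) < q * s.card

/-- `H` is a minor of `G`. -/
def HasMinor {V : Type u} {W : Type v} (G : SimpleGraph V) (H : SimpleGraph W) : Prop :=
  ∃ f : W → Set V, (∀ w, (f w).Nonempty) ∧
    (∀ w, (G.induce (f w)).Connected) ∧
    (∀ w w', w ≠ w' → Disjoint (f w) (f w')) ∧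
    (∀ w w', H.Adj w w' → ∃ x ∈ f w, ∃ y ∈ f w', G.Adj x y)

/-- Planarity via Wagner's theorem: no `K₅` minor and no `K₃,₃` minor. -/
def PlanarGraph {V : Type u} (G : SimpleGraph V) : Prop :=
  ¬ HasMinor G (⊤ : SimpleGraph (Fin 5)) ∧
  ¬ HasMinor G (completeBipartiteGraph (Fin 3) (Fin 3))


/-!
Delete the two edges at the middle vertex `v₂` of the thread. By minimality the square of the
smaller graph has an independent transversal for the cover restricted to it. Every square
adjacency of `G` avoiding `v₁` and `v₂` survives the deletion, so this transversal is already
independent in the original cover away from `v₁, v₂`. Now recolour `v₁` and then `v₂`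
greedily: since cross edges form matchings, each square-neighbour forbids at most one colour,
and in a subcubic graph `v₁` has at most four square-neighbours other than `v₂`, while `v₂`
has at most four square-neighbours in all.
-/

section

variable {V : Type u}

def coverRestrict (H : SimpleGraph (V × ℕ)) (K : SimpleGraph V) : SimpleGraph (V × ℕ) where
  Adj p q := H.Adj p q ∧ (p.1 = q.1 ∨ K.Adj p.1 q.1)
  symm := ⟨fun _ _ h => ⟨h.1.symm, h.2.imp Eq.symm fun h' => h'.symm⟩⟩
  loopless := ⟨fun p h => H.loopless.irrefl p h.1⟩

def IsIndepTransversalOn (H : SimpleGraph (V × ℕ)) (L : V → Finset ℕ) (f : V → ℕ)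
    (s : Finset V) : Prop :=
  (∀ v, f v ∈ L v) ∧ ∀ a ∈ s, ∀ b ∈ s, a ≠ b → ¬ H.Adj (a, f a) (b, f b)

variable {G K : SimpleGraph V} {L : V → Finset ℕ} {H : SimpleGraph (V × ℕ)}

lemma IsDPCover.restrict (hH : IsDPCover G L H) (K : SimpleGraph V) :
    IsDPCover K L (coverRestrict H K) :=
  ⟨fun v c hc c' hc' hne => ⟨hH.1 v c hc c' hc' hne, Or.inl rfl⟩,
    fun u v c c' h => ⟨(hH.2.1 u v c c' h.1).1, (hH.2.1 u v c c' h.1).2.1, h.2⟩,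
    fun u v huv c c₁ c₂ h₁ h₂ => hH.2.2 u v huv c c₁ c₂ h₁.1 h₂.1⟩

lemma IsDPCover.isIndepTransversalOn_of_coverRestrict (hH : IsDPCover G L H) {f : V → ℕ}
    {s : Finset V} (hf : IsIndepTransversalOn (coverRestrict H K) L f s)
    (hGK : ∀ a ∈ s, ∀ b ∈ s, G.Adj a b → K.Adj a b) :
    IsIndepTransversalOn H L f s :=
  ⟨hf.1, fun a ha b hb hab hadj => hf.2 a ha b hb hab
    ⟨hadj, Or.inr (hGK a ha b hb ((hH.2.1 _ _ _ _ hadj).2.2.resolve_left hab))⟩⟩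

lemma IsDPCover.exists_mem_forall_not_adj (hH : IsDPCover K L H) (g : V → ℕ) {v : V}
    {W : Finset V} (hv : v ∉ W) (hW : #W < #(L v)) :
    ∃ c ∈ L v, ∀ w ∈ W, ¬ H.Adj (v, c) (w, g w) := by
  classical
  have hblocked : {c ∈ L v | ∃ w ∈ W, H.Adj (v, c) (w, g w)} ⊆
      W.biUnion fun w => {c ∈ L v | H.Adj (v, c) (w, g w)} := by
    intro c hc
    simp only [mem_filter, mem_biUnion] at hc ⊢
    obtain ⟨hc, w, hw, hadj⟩ := hc
    exact ⟨w, hw, hc, hadj⟩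
  -- the matching condition: `(w, g w)` has at most one neighbour in the fibre of `v`
  have hone : ∀ w ∈ W, #{c ∈ L v | H.Adj (v, c) (w, g w)} ≤ 1 := by
    intro w hw
    refine card_le_one.2 fun c hc c' hc' => ?_
    rw [mem_filter] at hc hc'
    exact hH.2.2 w v (ne_of_mem_of_not_mem hw hv) (g w) c c' hc.2.symm hc'.2.symm
  have hcard : #{c ∈ L v | ∃ w ∈ W, H.Adj (v, c) (w, g w)} < #(L v) :=
    calc _ ≤ #W * 1 := (card_le_card hblocked).trans (card_biUnion_le_card_mul _ _ _ hone)
      _ < #(L v) := by rwa [mul_one]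
  obtain ⟨c, hc, hcb⟩ := exists_mem_notMem_of_card_lt_card hcard
  exact ⟨c, hc, fun w hw hadj => hcb (mem_filter.2 ⟨hc, w, hw, hadj⟩)⟩

lemma graphSq_deleteIncidenceSet_adj {x a b : V} (h : (graphSq G).Adj a b)
    (ha : a ≠ x) (hb : b ≠ x) (hab : ¬ (G.Adj x a ∧ G.Adj x b)) :
    (graphSq (G.deleteIncidenceSet x)).Adj a b := by
  obtain ⟨hne, hadj | ⟨w, haw, hwb⟩⟩ := h
  · exact ⟨hne, Or.inl (SimpleGraph.deleteIncidenceSet_adj.2 ⟨hadj, ha, hb⟩)⟩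
  · have hw : w ≠ x := by rintro rfl; exact hab ⟨haw.symm, hwb⟩
    exact ⟨hne, Or.inr ⟨w, SimpleGraph.deleteIncidenceSet_adj.2 ⟨haw, ha, hw⟩,
      SimpleGraph.deleteIncidenceSet_adj.2 ⟨hwb, hw, hb⟩⟩⟩

variable [Fintype V] [DecidableEq V]

lemma IsIndepTransversalOn.exists_update [DecidableRel K.Adj] (hH : IsDPCover K L H)
    {f : V → ℕ} {s : Finset V} (hf : IsIndepTransversalOn H L f s) (v : V)
    (hv : #(K.neighborFinset v ∩ s) < #(L v)) :
    ∃ c, IsIndepTransversalOn H L (Function.update f v c) (insert v s) := by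
  obtain ⟨c, hcL, hc⟩ := hH.exists_mem_forall_not_adj f (by simp) hv
  have hvc : ∀ b ∈ s, b ≠ v → ¬ H.Adj (v, c) (b, f b) := fun b hb hbv hadj =>
    hc b (by simpa [hb] using (hH.2.1 _ _ _ _ hadj).2.2.resolve_left hbv.symm) hadj
  refine ⟨c, fun w => ?_, fun a ha b hb hab => ?_⟩
  · rcases eq_or_ne w v with rfl | hw
    · simpa using hcL
    · simpa [hw] using hf.1 w
  rcases eq_or_ne a v with rfl | hav
  · simpa [hab.symm] using hvc b ((mem_insert.1 hb).resolve_left hab.symm) hab.symm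
  rcases eq_or_ne b v with rfl | hbv
  · simpa [hab] using fun h => hvc a ((mem_insert.1 ha).resolve_left hav) hav h.symm
  simpa [hav, hbv] using
    hf.2 a ((mem_insert.1 ha).resolve_left hav) b ((mem_insert.1 hb).resolve_left hbv) hab

lemma card_neighborFinset_inter_lt_degree [DecidableRel K.Adj] {v x : V} {s : Finset V}
    (hvx : K.Adj v x) (hx : x ∉ s) : #(K.neighborFinset v ∩ s) < K.degree v := by
  rw [← K.card_neighborFinset_eq_degree]
  exact card_lt_card ⟨inter_subset_left, fun h => hx (mem_of_mem_inter_right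
    (h ((K.mem_neighborFinset v x).2 hvx)))⟩

variable [DecidableRel G.Adj]

lemma degree_graphSq_le [DecidableRel (graphSq G).Adj] (v : V) :
    (graphSq G).degree v ≤ ∑ x ∈ G.neighborFinset v, G.degree x := by
  have hsub : (graphSq G).neighborFinset v ⊆
      (G.neighborFinset v).biUnion fun x => insert x ((G.neighborFinset x).erase v) := by
    intro w hw
    obtain ⟨hvw, hadj | ⟨x, hvx, hxw⟩⟩ := (SimpleGraph.mem_neighborFinset _ _ _).1 hw
    · exact mem_biUnion.2 ⟨w, by simpa using hadj, mem_insert_self _ _⟩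
    · exact mem_biUnion.2 ⟨x, by simpa using hvx, by simp [hxw, hvw.symm]⟩
  refine (card_le_card hsub).trans (card_biUnion_le.trans (sum_le_sum fun x hx => ?_))
  have hvx : v ∈ G.neighborFinset x := by simpa [SimpleGraph.adj_comm] using hx
  have := card_erase_of_mem hvx
  have := card_insert_le x ((G.neighborFinset x).erase v)
  have := card_pos.2 ⟨v, hvx⟩
  rw [← SimpleGraph.card_neighborFinset_eq_degree]
  omega

lemma degree_graphSq_le_five [DecidableRel (graphSq G).Adj] (hsub : ∀ v, G.degree v ≤ 3)
    {v w : V} (hv : G.degree v = 2) (hvw : G.Adj v w) (hw : G.degree w = 2) :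
    (graphSq G).degree v ≤ 5 := by
  have hw' : w ∈ G.neighborFinset v := by simpa using hvw
  have hrest := sum_le_card_nsmul ((G.neighborFinset v).erase w) (fun x => G.degree x) 3
    fun x _ => hsub x
  rw [card_erase_of_mem hw', SimpleGraph.card_neighborFinset_eq_degree, hv, smul_eq_mul] at hrest
  have := degree_graphSq_le (G := G) v
  rw [← add_sum_erase _ _ hw', hw] at this
  omega

lemma neighborFinset_eq_pair {v a b : V} (hd : G.degree v = 2) (ha : G.Adj v a)
    (hb : G.Adj v b) (hab : a ≠ b) : G.neighborFinset v = {a, b} :=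
  (eq_of_subset_of_card_le (by simp [insert_subset_iff, ha, hb])
    (by rw [card_pair hab, SimpleGraph.card_neighborFinset_eq_degree, hd])).symm

end

/-- a 5-minimal subcubic graph contains no 3-thread. -/
theorem no_three_thread_of_5minimal {V : Type u} [Fintype V] (G : SimpleGraph V)
    (hsub : ∀ v, G.degree v ≤ 3) (hmin : KMinimal G 5) :
    ¬ ∃ v₁ v₂ v₃ : V, v₁ ≠ v₃ ∧ G.Adj v₁ v₂ ∧ G.Adj v₂ v₃ ∧
      G.degree v₁ = 2 ∧ G.degree v₂ = 2 ∧ G.degree v₃ = 2 := by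
  rintro ⟨v₁, v₂, v₃, h13, h12, h23, d₁, d₂, d₃⟩
  have hN₂ : G.neighborFinset v₂ = {v₁, v₃} := neighborFinset_eq_pair d₂ h12.symm h23 h13
  have hlt : G.deleteIncidenceSet v₂ < G := lt_of_le_of_ne (G.deleteIncidenceSet_le v₂)
    fun h => (SimpleGraph.deleteIncidenceSet_adj.1 (h ▸ h12)).2.2 rfl
  refine hmin.1 fun L H hH hL => ?_
  obtain ⟨f, hfL, hf⟩ := hmin.2 _ hlt L _ (hH.restrict _) hL
  set s : Finset V := univ \ {v₁, v₂}
  have hf₀ : IsIndepTransversalOn H L f s := by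
    refine hH.isIndepTransversalOn_of_coverRestrict ⟨hfL, fun a _ b _ => hf a b⟩ ?_
    intro a ha b hb hab
    simp only [s, mem_sdiff, mem_univ, mem_insert, mem_singleton, true_and, not_or] at ha hb
    refine graphSq_deleteIncidenceSet_adj hab ha.2 hb.2 ?_
    simp only [← SimpleGraph.mem_neighborFinset, hN₂, mem_insert, mem_singleton]
    rintro ⟨ha₃, hb₃⟩
    exact hab.1 ((ha₃.resolve_left ha.1).trans (hb₃.resolve_left hb.1).symm)
  have hsq₁₂ : (graphSq G).Adj v₁ v₂ := ⟨h12.ne, Or.inl h12⟩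
  obtain ⟨c₁, hf₁⟩ := hf₀.exists_update hH v₁ <|
    (card_neighborFinset_inter_lt_degree hsq₁₂ (by simp [s])).trans_le
      ((degree_graphSq_le_five hsub d₁ h12 d₂).trans (hL v₁))
  have hdeg₂ : (graphSq G).degree v₂ < #(L v₂) := by
    have := degree_graphSq_le (G := G) v₂
    rw [hN₂, sum_pair h13, d₁, d₃] at this
    linarith [hL v₂]
  obtain ⟨c₂, hf₂⟩ := hf₁.exists_update hH v₂ <|
    ((card_le_card inter_subset_left).trans_eq
      (SimpleGraph.card_neighborFinset_eq_degree _ _)).trans_lt hdeg₂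
  refine ⟨_, hf₂.1, fun a b hab => hf₂.2 a ?_ b ?_ hab⟩ <;> simp [s] <;> tauto
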